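/- Let R > 1, α ∈ ℝ, and set t = 2 sin((u−α)/2), s = 2(R+cos α) sin(v/2). Then |p(u,v) − p(α,0)|² = t² + s² − (cos α/(2(R+cos α)))·t²s² − (sin α/(2(R+cos α)))·s²·t·√(4−t²), provided (u−α)/2 ∈ [−π/2, π/2] so that √(4−t²) = 2 cos((u−α)/2). -/

import Mathlib

/-! Chords of the torus satisfy
`‖p(u,v) - p(u',v')‖² = 4 sin²((u-u')/2) + 4 (R + cos u)(R + cos u') sin²((v-v')/2)`.
For `u' = α`, `v' = 0` and `θ = (u-α)/2`, the sum-to-product formula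
`cos u - cos α = -2 sin(α + θ) sin θ` turns `R + cos u` into `R + cos α` plus the two correction
terms, and `√(4 - t²) = 2 cos θ` because `cos θ ≥ 0` for `|θ| ≤ π/2`. -/

open Real

noncomputable def torusParam (R u v : ℝ) : EuclideanSpace ℝ (Fin 3) :=
  WithLp.toLp 2 ![(R + Real.cos u) * Real.cos v, (R + Real.cos u) * Real.sin v, Real.sin u]

lemma cos_eq_one_sub_two_mul_sin_half_sq (x : ℝ) : cos x = 1 - 2 * sin (x / 2) ^ 2 := by
  rw [← cos_two_mul_eq_one_sub, mul_div_cancel₀ x two_ne_zero]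

lemma norm_torusParam_sub_sq (R u v u' v' : ℝ) :
    ‖torusParam R u v - torusParam R u' v'‖ ^ 2
      = (2 * sin ((u - u') / 2)) ^ 2
        + 4 * (R + cos u) * (R + cos u') * sin ((v - v') / 2) ^ 2 := by
  rw [EuclideanSpace.real_norm_sq_eq, Fin.sum_univ_three]
  simp only [torusParam, WithLp.ofLp_sub, Pi.sub_apply, Matrix.cons_val_zero,
    Matrix.cons_val_one, Matrix.cons_val_two, Matrix.head_cons, Matrix.tail_cons]
  have hu := cos_eq_one_sub_two_mul_sin_half_sq (u - u')
  have hv := cos_eq_one_sub_two_mul_sin_half_sq (v - v')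
  rw [cos_sub] at hu hv
  linear_combination (-2) * hu - 2 * (R + cos u) * (R + cos u') * hv
    + sin_sq_add_cos_sq u + sin_sq_add_cos_sq u' + (R + cos u) ^ 2 * sin_sq_add_cos_sq v
    + (R + cos u') ^ 2 * sin_sq_add_cos_sq v'

lemma sqrt_four_sub_two_mul_sin_sq {θ : ℝ} (hθ : θ ∈ Set.Icc (-(π / 2)) (π / 2)) :
    √(4 - (2 * sin θ) ^ 2) = 2 * cos θ := by
  rw [← sqrt_sq (by linarith [cos_nonneg_of_mem_Icc hθ] : 0 ≤ 2 * cos θ)]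
  congr 1
  linear_combination (-4) * sin_sq_add_cos_sq θ

lemma div_mul_mul_sq {K : Type*} [Field K] (a b x : K) :
    a / b * (b * x) ^ 2 = a * b * x ^ 2 := by
  rcases eq_or_ne b 0 with rfl | hb
  · simp
  · field_simp

theorem torus_dist_sq_ts_general (R : ℝ) (α u v : ℝ)
    (hu : (u - α) / 2 ∈ Set.Icc (-(π/2)) (π/2)) :
    ‖torusParam R u v - torusParam R α 0‖^2
      = (2 * Real.sin ((u - α)/2))^2 + (2 * (R + Real.cos α) * Real.sin (v/2))^2
        - (Real.cos α / (2 * (R + Real.cos α))) * (2 * Real.sin ((u - α)/2))^2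
            * (2 * (R + Real.cos α) * Real.sin (v/2))^2
        - (Real.sin α / (2 * (R + Real.cos α))) * (2 * (R + Real.cos α) * Real.sin (v/2))^2
            * (2 * Real.sin ((u - α)/2))
            * Real.sqrt (4 - (2 * Real.sin ((u - α)/2))^2) := by
  rw [norm_torusParam_sub_sq, sqrt_four_sub_two_mul_sin_sq hu, sub_zero]
  have hcos : cos u - cos α = -2 * sin (α + (u - α) / 2) * sin ((u - α) / 2) := by
    rw [cos_sub_cos]
    ring_nf
  rw [sin_add] at hcos
  have hB (c : ℝ) := div_mul_mul_sq c (2 * (R + cos α)) (sin (v / 2))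
  linear_combination 4 * (R + cos α) * sin (v / 2) ^ 2 * hcos
    + (2 * sin ((u - α) / 2)) ^ 2 * hB (cos α)
    + 2 * sin ((u - α) / 2) * 2 * cos ((u - α) / 2) * hB (sin α)

theorem torus_dist_sq_ts (R : ℝ) (hR : 1 < R) (α u v : ℝ)
    (hu : (u - α) / 2 ∈ Set.Icc (-(π/2)) (π/2)) :
    ‖torusParam R u v - torusParam R α 0‖^2
      = (2 * Real.sin ((u - α)/2))^2 + (2 * (R + Real.cos α) * Real.sin (v/2))^2
        - (Real.cos α / (2 * (R + Real.cos α))) * (2 * Real.sin ((u - α)/2))^2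
            * (2 * (R + Real.cos α) * Real.sin (v/2))^2
        - (Real.sin α / (2 * (R + Real.cos α))) * (2 * (R + Real.cos α) * Real.sin (v/2))^2
            * (2 * Real.sin ((u - α)/2))
            * Real.sqrt (4 - (2 * Real.sin ((u - α)/2))^2) :=
  torus_dist_sq_ts_general R α u v hu
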